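/- For t ≥ 1 and high frequencies, ‖K̂₀(t,ξ) χ_H(|ξ|)‖_{L^∞} ≤ C e^{-ct} and ‖|ξ|^{2σ₂} K̂₁(t,ξ) χ_H(|ξ|)‖_{L^∞} ≤ C e^{-ct}, where K̂₀(t,ξ) = (λ₁ e^{λ₂ t} − λ₂ e^{λ₁ t})/(λ₁−λ₂) and K̂₁(t,ξ) = (e^{λ₁ t} − e^{λ₂ t})/(λ₁−λ₂), evaluated at r = |ξ|, and χ_H is a smooth cutoff equal to 1 for |ξ| ≥ ε* and 0 for |ξ| ≤ ε*/2. -/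

import Mathlib

open Real Set

/-- The square root of the discriminant, as a complex number. -/
noncomputable def discC (σ σ₁ σ₂ r : ℝ) : ℂ :=
  (((r ^ (2*σ₁) + r ^ (2*σ₂))^2 - 4 * r ^ (2*σ) : ℝ) : ℂ) ^ ((1:ℂ)/2)

noncomputable def lam1C (σ σ₁ σ₂ r : ℝ) : ℂ :=
  (((-(r ^ (2*σ₁)) - r ^ (2*σ₂) : ℝ) : ℂ) + discC σ σ₁ σ₂ r) / 2

noncomputable def lam2C (σ σ₁ σ₂ r : ℝ) : ℂ :=
  (((-(r ^ (2*σ₁)) - r ^ (2*σ₂) : ℝ) : ℂ) - discC σ σ₁ σ₂ r) / 2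

noncomputable def Khat0 (σ σ₁ σ₂ t r : ℝ) : ℂ :=
  (lam1C σ σ₁ σ₂ r * Complex.exp (lam2C σ σ₁ σ₂ r * (t:ℂ))
    - lam2C σ σ₁ σ₂ r * Complex.exp (lam1C σ σ₁ σ₂ r * (t:ℂ)))
  / (lam1C σ σ₁ σ₂ r - lam2C σ σ₁ σ₂ r)

noncomputable def Khat1 (σ σ₁ σ₂ t r : ℝ) : ℂ :=
  (Complex.exp (lam1C σ σ₁ σ₂ r * (t:ℂ)) - Complex.exp (lam2C σ σ₁ σ₂ r * (t:ℂ)))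
  / (lam1C σ σ₁ σ₂ r - lam2C σ σ₁ σ₂ r)

lemma exp_re_mul_le {lam : ℂ} {ρ t : ℝ} (h : lam.re ≤ -ρ) (ht : 0 < t) :
    ‖Complex.exp (lam * (t:ℂ))‖ ≤ Real.exp (-(ρ*t)) := by
  rw [Complex.norm_exp]
  apply Real.exp_le_exp.mpr
  have hre : (lam * (t:ℂ)).re = lam.re * t := by simp [Complex.mul_re]
  rw [hre]
  nlinarith

lemma re_le_of_mem_segment {w z x : ℂ} {M : ℝ} (hw : w.re ≤ M) (hz : z.re ≤ M)
    (hx : x ∈ segment ℝ w z) : x.re ≤ M := by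
  obtain ⟨a, b, ha, hb, hab, rfl⟩ := hx
  have h : (a • w + b • z).re = a * w.re + b * z.re := by
    simp [Complex.add_re, Complex.smul_re]
  rw [h]
  have h3 : a*M + b*M = M := by rw [← add_mul, hab, one_mul]
  nlinarith [mul_le_mul_of_nonneg_left hw ha, mul_le_mul_of_nonneg_left hz hb]

lemma exp_sub_exp_norm_le (z w : ℂ) (M : ℝ) (hz : z.re ≤ M) (hw : w.re ≤ M) :
    ‖Complex.exp z - Complex.exp w‖ ≤ Real.exp M * ‖z - w‖ := by
  have := Convex.norm_image_sub_le_of_norm_hasDerivWithin_le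
    (f := Complex.exp) (f' := Complex.exp) (s := segment ℝ w z) (C := Real.exp M)
    (fun x _ => (Complex.hasDerivAt_exp x).hasDerivWithinAt)
    (fun x hx => by
      rw [Complex.norm_exp]
      exact Real.exp_le_exp.mpr (re_le_of_mem_segment hw hz hx))
    (convex_segment w z) (left_mem_segment ℝ w z) (right_mem_segment ℝ w z)
  simpa using this

lemma absorb0 (x : ℝ) (hx : 0 ≤ x) : (1 + 2*x) * Real.exp (-x) ≤ 4 * Real.exp (-x/2) := by
  have h := Real.add_one_le_exp (x/2)
  have e1 : Real.exp (-x) = Real.exp (-x/2) * Real.exp (-x/2) := by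
    rw [← Real.exp_add]; ring_nf
  have e2 : Real.exp (-x/2) * Real.exp (x/2) = 1 := by rw [← Real.exp_add]; simp [neg_div]
  nlinarith [Real.exp_pos (-x/2), Real.exp_pos (x/2)]

lemma absorb1 (x : ℝ) (hx : 0 ≤ x) : (8*x) * Real.exp (-x) ≤ 16 * Real.exp (-x/2) := by
  have h := Real.add_one_le_exp (x/2)
  have e1 : Real.exp (-x) = Real.exp (-x/2) * Real.exp (-x/2) := by
    rw [← Real.exp_add]; ring_nf
  have e2 : Real.exp (-x/2) * Real.exp (x/2) = 1 := by rw [← Real.exp_add]; simp [neg_div]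
  nlinarith [Real.exp_pos (-x/2), Real.exp_pos (x/2)]

lemma core0 (lam mu : ℂ) (t ρ : ℝ) (ht : 0 < t) (hρ : 0 < ρ)
    (h1 : lam.re ≤ -ρ) (h2 : mu.re ≤ -ρ) (h3 : ‖lam‖ ≤ 2*ρ) :
    ‖(lam * Complex.exp (mu*(t:ℂ)) - mu * Complex.exp (lam*(t:ℂ))) / (lam - mu)‖
      ≤ 4 * Real.exp (-(ρ*t)/2) := by
  by_cases hlm : lam = mu
  · simp only [hlm, sub_self, div_zero, norm_zero]
    positivity
  · have hne : lam - mu ≠ 0 := sub_ne_zero.mpr hlm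
    have key : (lam * Complex.exp (mu*(t:ℂ)) - mu * Complex.exp (lam*(t:ℂ))) / (lam - mu)
        = Complex.exp (lam*(t:ℂ))
          + lam * ((Complex.exp (mu*(t:ℂ)) - Complex.exp (lam*(t:ℂ))) / (lam - mu)) := by
      field_simp
      ring
    rw [key]
    have hmt : (mu*(t:ℂ)).re ≤ -(ρ*t) := by
      have hre : (mu * (t:ℂ)).re = mu.re * t := by simp [Complex.mul_re]
      rw [hre]; nlinarith
    have hlt : (lam*(t:ℂ)).re ≤ -(ρ*t) := by
      have hre : (lam * (t:ℂ)).re = lam.re * t := by simp [Complex.mul_re]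
      rw [hre]; nlinarith
    have hd : ‖Complex.exp (mu*(t:ℂ)) - Complex.exp (lam*(t:ℂ))‖
        ≤ Real.exp (-(ρ*t)) * (‖lam - mu‖ * t) := by
      have := exp_sub_exp_norm_le (mu*(t:ℂ)) (lam*(t:ℂ)) (-(ρ*t)) hmt hlt
      have hn : ‖mu*(t:ℂ) - lam*(t:ℂ)‖ = ‖lam - mu‖ * t := by
        rw [← sub_mul, norm_mul, norm_sub_rev, Complex.norm_real]
        simp [abs_of_pos ht]
      rw [hn] at this
      exact this
    calc ‖Complex.exp (lam*(t:ℂ))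
          + lam * ((Complex.exp (mu*(t:ℂ)) - Complex.exp (lam*(t:ℂ))) / (lam - mu))‖
        ≤ ‖Complex.exp (lam*(t:ℂ))‖
          + ‖lam‖ * (‖Complex.exp (mu*(t:ℂ)) - Complex.exp (lam*(t:ℂ))‖ / ‖lam - mu‖) := by
          refine (norm_add_le _ _).trans ?_
          rw [norm_mul, norm_div]
      _ ≤ Real.exp (-(ρ*t)) + (2*ρ) * ((Real.exp (-(ρ*t)) * (‖lam - mu‖ * t)) / ‖lam - mu‖) := by
          have hnn : (0:ℝ) < ‖lam - mu‖ := norm_pos_iff.mpr hne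
          gcongr
          exact exp_re_mul_le h1 ht
      _ = (1 + 2*(ρ*t)) * Real.exp (-(ρ*t)) := by
          have hnn : (0:ℝ) < ‖lam - mu‖ := norm_pos_iff.mpr hne
          have hA : ‖lam - mu‖ ≠ 0 := by
            exact ne_of_gt hnn
          field_simp
      _ ≤ 4 * Real.exp (-(ρ*t)/2) := absorb0 (ρ*t) (by positivity)

lemma core1 (lam mu : ℂ) (t ρ w : ℝ) (ht : 0 < t) (hρ : 0 < ρ) (hw : 0 ≤ w)
    (h1 : lam.re ≤ -ρ) (h2 : mu.re ≤ -ρ)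
    (h3 : w ≤ 2*‖lam - mu‖ ∨ w ≤ 8*ρ) :
    ‖(w:ℂ) * ((Complex.exp (lam*(t:ℂ)) - Complex.exp (mu*(t:ℂ))) / (lam - mu))‖
      ≤ 16 * Real.exp (-(ρ*t)/2) := by
  by_cases hlm : lam = mu
  · simp only [hlm, sub_self, div_zero, mul_zero, norm_zero]
    positivity
  · have hne : lam - mu ≠ 0 := sub_ne_zero.mpr hlm
    have hnn : (0:ℝ) < ‖lam - mu‖ := norm_pos_iff.mpr hne
    have hmt : (mu*(t:ℂ)).re ≤ -(ρ*t) := by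
      have hre : (mu * (t:ℂ)).re = mu.re * t := by simp [Complex.mul_re]
      rw [hre]; nlinarith
    have hlt : (lam*(t:ℂ)).re ≤ -(ρ*t) := by
      have hre : (lam * (t:ℂ)).re = lam.re * t := by simp [Complex.mul_re]
      rw [hre]; nlinarith
    have hEhalf : Real.exp (-(ρ*t)) ≤ Real.exp (-(ρ*t)/2) := by
      apply Real.exp_le_exp.mpr; nlinarith
    rw [norm_mul, norm_div, Complex.norm_real, Real.norm_eq_abs, abs_of_nonneg hw]
    rcases h3 with h3 | h3
    · have hd : ‖Complex.exp (lam*(t:ℂ)) - Complex.exp (mu*(t:ℂ))‖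
          ≤ 2 * Real.exp (-(ρ*t)) := by
        calc ‖Complex.exp (lam*(t:ℂ)) - Complex.exp (mu*(t:ℂ))‖
            ≤ ‖Complex.exp (lam*(t:ℂ))‖ + ‖Complex.exp (mu*(t:ℂ))‖ := norm_sub_le _ _
          _ ≤ Real.exp (-(ρ*t)) + Real.exp (-(ρ*t)) := by
              gcongr
              · exact exp_re_mul_le h1 ht
              · exact exp_re_mul_le h2 ht
          _ = 2 * Real.exp (-(ρ*t)) := by ring
      calc w * (‖Complex.exp (lam*(t:ℂ)) - Complex.exp (mu*(t:ℂ))‖ / ‖lam - mu‖)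
          ≤ (2*‖lam - mu‖) * ((2 * Real.exp (-(ρ*t))) / ‖lam - mu‖) := by gcongr
        _ = 4 * Real.exp (-(ρ*t)) := by
            have hA : ‖lam - mu‖ ≠ 0 := by
              exact ne_of_gt hnn
            field_simp
            ring
        _ ≤ 16 * Real.exp (-(ρ*t)/2) := by nlinarith [Real.exp_pos (-(ρ*t))]
    · have hd : ‖Complex.exp (lam*(t:ℂ)) - Complex.exp (mu*(t:ℂ))‖
          ≤ Real.exp (-(ρ*t)) * (‖lam - mu‖ * t) := by
        have := exp_sub_exp_norm_le (lam*(t:ℂ)) (mu*(t:ℂ)) (-(ρ*t)) hlt hmt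
        have hn : ‖lam*(t:ℂ) - mu*(t:ℂ)‖ = ‖lam - mu‖ * t := by
          rw [← sub_mul, norm_mul, Complex.norm_real]
          simp [abs_of_pos ht]
        rw [hn] at this
        exact this
      calc w * (‖Complex.exp (lam*(t:ℂ)) - Complex.exp (mu*(t:ℂ))‖ / ‖lam - mu‖)
          ≤ (8*ρ) * ((Real.exp (-(ρ*t)) * (‖lam - mu‖ * t)) / ‖lam - mu‖) := by gcongr
        _ = (8*(ρ*t)) * Real.exp (-(ρ*t)) := by
            have hA : ‖lam - mu‖ ≠ 0 := by
              exact ne_of_gt hnn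
            field_simp
        _ ≤ 16 * Real.exp (-(ρ*t)/2) := absorb1 (ρ*t) (by positivity)

lemma symm0 (lam mu E F : ℂ) :
    (lam * E - mu * F) / (lam - mu) = (mu * F - lam * E) / (mu - lam) := by
  rw [show lam - mu = -(mu - lam) by ring, show lam * E - mu * F = -(mu * F - lam * E) by ring,
    neg_div_neg_eq]

set_option maxHeartbeats 1000000 in
lemma master (lam mu : ℂ) (a b t w : ℝ) (ha : 0 < a) (hb : 0 < b) (hba : b ≤ a^2)
    (hsum : lam + mu = ((-a : ℝ):ℂ)) (hprod : lam * mu = ((b:ℝ):ℂ)) (ht : 0 < t)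
    (hw : 0 ≤ w) (hwa : w ≤ a) :
    ‖(lam * Complex.exp (mu*(t:ℂ)) - mu * Complex.exp (lam*(t:ℂ))) / (lam - mu)‖
      ≤ 4 * Real.exp (-(min (b/a) (a/2) * t)/2) ∧
    ‖(w:ℂ) * ((Complex.exp (lam*(t:ℂ)) - Complex.exp (mu*(t:ℂ))) / (lam - mu))‖
      ≤ 16 * Real.exp (-(min (b/a) (a/2) * t)/2) := by
  obtain ⟨m, hm⟩ : ∃ m, m = min (b/a) (a/2) := ⟨_, rfl⟩
  rw [← hm]
  have hmba : m ≤ b/a := hm ▸ min_le_left _ _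
  have hma2 : m ≤ a/2 := hm ▸ min_le_right _ _
  have hmpos : 0 < m := hm ▸ lt_min (by positivity) (by positivity)
  have hres : lam.re + mu.re = -a := by
    have := congrArg Complex.re hsum; simpa using this
  have hims : lam.im + mu.im = 0 := by
    have := congrArg Complex.im hsum; simpa using this
  obtain ⟨x, hx⟩ : ∃ x, x = lam.re - mu.re := ⟨_, rfl⟩
  obtain ⟨y, hy⟩ : ∃ y, y = lam.im - mu.im := ⟨_, rfl⟩
  have hδsq : (lam - mu) * (lam - mu) = ((a^2 - 4*b : ℝ):ℂ) := by
    have h0 : (lam - mu) * (lam - mu) = (lam + mu) * (lam + mu) - 4 * (lam * mu) := by ring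
    rw [h0, hsum, hprod]
    push_cast
    ring
  have hre2 : x^2 - y^2 = a^2 - 4*b := by
    have h1 := congrArg Complex.re hδsq
    rw [Complex.ofReal_re] at h1
    simp only [Complex.mul_re, Complex.sub_re, Complex.sub_im] at h1
    rw [hx, hy]; nlinarith [h1]
  have him2 : x * y = 0 := by
    have h1 := congrArg Complex.im hδsq
    rw [Complex.ofReal_im] at h1
    simp only [Complex.mul_im, Complex.sub_re, Complex.sub_im] at h1
    rw [hx, hy]; nlinarith [h1]
  have step : ∀ ρ : ℝ, m ≤ ρ → Real.exp (-(ρ*t)/2) ≤ Real.exp (-(m*t)/2) := by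
    intro ρ hρ
    apply Real.exp_le_exp.mpr
    have : m * t ≤ ρ * t := by nlinarith
    linarith
  rcases le_or_gt (4*b) (a^2) with hD | hD
  · -- real roots case
    have hy0 : y = 0 := by
      rcases mul_eq_zero.mp him2 with hx0 | hy0
      · nlinarith [sq_nonneg y]
      · exact hy0
    have hyd : lam.im - mu.im = 0 := by rw [← hy, hy0]
    have hx2 : x^2 = a^2 - 4*b := by nlinarith [hre2, hy0]
    have hlim : lam.im = 0 := by linarith
    have hmim : mu.im = 0 := by linarith
    have hxa : |x| < a := by
      rw [abs_lt]
      constructor <;> nlinarith [sq_nonneg (x - a), sq_nonneg (x + a)]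
    obtain ⟨s, hs⟩ : ∃ s, s = |x| := ⟨_, rfl⟩
    have hs0 : 0 ≤ s := hs ▸ abs_nonneg x
    have hsx : -s ≤ x ∧ x ≤ s := hs ▸ ⟨neg_abs_le x, le_abs_self x⟩
    have hs2 : s^2 = a^2 - 4*b := by rw [hs, sq_abs]; exact hx2
    have hsa : s < a := hs ▸ hxa
    obtain ⟨ρ, hρdef⟩ : ∃ ρ, ρ = (a - s)/2 := ⟨_, rfl⟩
    have hρpos : 0 < ρ := by rw [hρdef]; linarith
    have hρb : b/a ≤ ρ := by
      rw [div_le_iff₀ ha]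
      nlinarith [sq_nonneg (a - s)]
    have hmρ : m ≤ ρ := le_trans hmba hρb
    have hlre : lam.re = (x - a)/2 := by rw [hx]; linarith
    have hmre : mu.re = (-a - x)/2 := by rw [hx]; linarith
    have h1 : lam.re ≤ -ρ := by rw [hlre, hρdef]; linarith [hsx.2]
    have h2 : mu.re ≤ -ρ := by rw [hmre, hρdef]; linarith [hsx.1]
    have hδc : lam - mu = ((x : ℝ) : ℂ) := by
      apply Complex.ext
      · simp [Complex.sub_re, hx]
      · simp only [Complex.sub_im, Complex.ofReal_im]
        have := hy.symm.trans hy0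
        linarith
    have hδnorm : ‖lam - mu‖ = s := by
      rw [hδc, Complex.norm_real, Real.norm_eq_abs, ← hs]
    constructor
    · -- Khat0 bound
      rcases le_or_gt 0 x with hx0 | hx0
      · have hnl : ‖lam‖ ≤ 2*ρ := by
          have hc : lam = ((lam.re : ℝ) : ℂ) := by
            apply Complex.ext
            · rfl
            · simpa using hlim
          rw [hc, Complex.norm_real, Real.norm_eq_abs, hlre,
            abs_of_nonpos (by linarith), hρdef]
          have : s = x := by rw [hs, abs_of_nonneg hx0]
          linarith
        refine (core0 lam mu t ρ ht hρpos h1 h2 hnl).trans ?_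
        linarith [step ρ hmρ]
      · have hnl : ‖mu‖ ≤ 2*ρ := by
          have hc : mu = ((mu.re : ℝ) : ℂ) := by
            apply Complex.ext
            · rfl
            · simpa using hmim
          rw [hc, Complex.norm_real, Real.norm_eq_abs, hmre,
            abs_of_nonpos (by linarith), hρdef]
          have : s = -x := by rw [hs, abs_of_neg hx0]
          linarith
        rw [symm0]
        refine (core0 mu lam t ρ ht hρpos h2 h1 hnl).trans ?_
        linarith [step ρ hmρ]
    · -- Khat1 bound
      rcases le_or_gt (8*b) (a^2) with h8 | h8
      · have hws : w ≤ 2*‖lam - mu‖ := by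
          rw [hδnorm]
          nlinarith
        refine (core1 lam mu t ρ w ht hρpos hw h1 h2 (Or.inl hws)).trans ?_
        linarith [step ρ hmρ]
      · have hws : w ≤ 8*ρ := by
          have hba' : b ≤ a * ρ := by
            rw [div_le_iff₀ ha] at hρb
            linarith
          nlinarith
        refine (core1 lam mu t ρ w ht hρpos hw h1 h2 (Or.inr hws)).trans ?_
        linarith [step ρ hmρ]
  · -- complex conjugate roots case
    have hx0 : x = 0 := by
      rcases mul_eq_zero.mp him2 with hx0 | hy0
      · exact hx0
      · nlinarith [sq_nonneg x]
    have hy2 : y^2 = 4*b - a^2 := by nlinarith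
    have hlre : lam.re = -(a/2) := by rw [hx] at hx0; linarith
    have hmre : mu.re = -(a/2) := by rw [hx] at hx0; linarith
    have h1 : lam.re ≤ -(a/2) := le_of_eq hlre
    have h2 : mu.re ≤ -(a/2) := le_of_eq hmre
    have hlam_im : lam.im = y/2 := by rw [hy]; linarith
    have hnl : ‖lam‖ ≤ 2*(a/2) := by
      have hsq : ‖lam‖^2 = lam.re^2 + lam.im^2 := by
        rw [Complex.sq_norm, Complex.normSq_apply]; ring
      have hval : ‖lam‖^2 = b := by
        rw [hsq, hlre, hlam_im]
        nlinarith
      nlinarith [norm_nonneg lam]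
    have hρpos : (0:ℝ) < a/2 := by positivity
    constructor
    · refine (core0 lam mu t (a/2) ht hρpos h1 h2 hnl).trans ?_
      linarith [step (a/2) hma2]
    · have hws : w ≤ 8*(a/2) := by linarith
      refine (core1 lam mu t (a/2) w ht hρpos hw h1 h2 (Or.inr hws)).trans ?_
      linarith [step (a/2) hma2]

set_option maxHeartbeats 1600000 in
theorem stmt15 (σ σ₁ σ₂ εs : ℝ) (hσ : 1 ≤ σ) (hσ₁ : 0 ≤ σ₁) (h12 : σ₁ < σ / 2)
    (h22 : σ / 2 < σ₂) (h2σ : σ₂ ≤ σ) (hε : 0 < εs)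
    (χH : ℝ → ℝ) (hχ : ContDiff ℝ (⊤ : ℕ∞) χH)
    (hχ1 : ∀ r ≥ εs, χH r = 1) (hχ0 : ∀ r ≤ εs/2, χH r = 0)
    (hχrange : ∀ r, χH r ∈ Set.Icc (0:ℝ) 1) :
    ∃ C > 0, ∃ c > 0, ∀ t ≥ (1:ℝ), ∀ r ≥ (0:ℝ),
      ‖Khat0 σ σ₁ σ₂ t r * ((χH r : ℝ) : ℂ)‖ ≤ C * Real.exp (-c * t) ∧
      ‖((r ^ (2*σ₂) : ℝ) : ℂ) * Khat1 σ σ₁ σ₂ t r * ((χH r : ℝ) : ℂ)‖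
        ≤ C * Real.exp (-c * t) := by
  have hε2 : (0:ℝ) < εs/2 := by positivity
  obtain ⟨κ, hκdef⟩ : ∃ κ, κ = (min ((εs/2) ^ (2*σ-2*σ₁)) ((εs/2) ^ (2*σ-2*σ₂)))/2 := ⟨_, rfl⟩
  obtain ⟨a₀, ha₀def⟩ : ∃ a₀, a₀ = (εs/2) ^ (2*σ₁) := ⟨_, rfl⟩
  have hκpos : 0 < κ := by
    rw [hκdef]
    have h1 := Real.rpow_pos_of_pos hε2 (2*σ-2*σ₁)
    have h2 := Real.rpow_pos_of_pos hε2 (2*σ-2*σ₂)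
    have := lt_min h1 h2
    linarith
  have ha₀pos : 0 < a₀ := ha₀def ▸ Real.rpow_pos_of_pos hε2 _
  obtain ⟨c₀, hc₀def⟩ : ∃ c₀, c₀ = min κ (a₀/2) := ⟨_, rfl⟩
  have hc₀pos : 0 < c₀ := hc₀def ▸ lt_min hκpos (by positivity)
  refine ⟨16, by norm_num, c₀/2, by positivity, ?_⟩
  intro t ht r hr
  have ht0 : (0:ℝ) < t := by linarith
  by_cases hcut : r ≤ εs/2
  · constructor
    · rw [hχ0 r hcut]
      simp only [Complex.ofReal_zero, mul_zero, norm_zero]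
      positivity
    · rw [hχ0 r hcut]
      simp only [Complex.ofReal_zero, mul_zero, norm_zero]
      positivity
  push_neg at hcut
  have hrε : εs/2 ≤ r := le_of_lt hcut
  have hr0 : 0 < r := lt_trans hε2 hcut
  obtain ⟨A, hAdef⟩ : ∃ A, A = r ^ (2*σ₁) + r ^ (2*σ₂) := ⟨_, rfl⟩
  obtain ⟨B, hBdef⟩ : ∃ B, B = r ^ (2*σ) := ⟨_, rfl⟩
  have hr1pos : 0 < r ^ (2*σ₁) := Real.rpow_pos_of_pos hr0 _
  have hr2pos : 0 < r ^ (2*σ₂) := Real.rpow_pos_of_pos hr0 _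
  have hApos : 0 < A := by rw [hAdef]; positivity
  have hBpos : 0 < B := hBdef ▸ Real.rpow_pos_of_pos hr0 _
  have hBA2 : B ≤ A^2 := by
    have hs : r ^ σ ≤ A := by
      rw [hAdef]
      rcases le_total r 1 with h1 | h1
      · have h2 : r ^ σ ≤ r ^ (2*σ₁) :=
          Real.rpow_le_rpow_of_exponent_ge hr0 h1 (by linarith)
        linarith
      · have h2 : r ^ σ ≤ r ^ (2*σ₂) :=
          Real.rpow_le_rpow_of_exponent_le h1 (by linarith)
        linarith
    have hBsq : B = (r ^ σ)^2 := by
      rw [hBdef, show (2*σ) = σ*2 by ring, Real.rpow_mul hr0.le,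
        show ((2:ℝ)) = ((2:ℕ):ℝ) by norm_num, Real.rpow_natCast]
    have hσpos : (0:ℝ) < r ^ σ := Real.rpow_pos_of_pos hr0 _
    rw [hBsq]
    nlinarith [hs]
  have hκBA : κ ≤ B/A := by
    rw [le_div_iff₀ hApos, hκdef]
    have m1 : r ^ (2*σ₁) * (εs/2) ^ (2*σ-2*σ₁) ≤ B := by
      have h1 : (εs/2) ^ (2*σ-2*σ₁) ≤ r ^ (2*σ-2*σ₁) :=
        Real.rpow_le_rpow hε2.le hrε (by linarith)
      calc r ^ (2*σ₁) * (εs/2) ^ (2*σ-2*σ₁) ≤ r ^ (2*σ₁) * r ^ (2*σ-2*σ₁) :=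
            mul_le_mul_of_nonneg_left h1 hr1pos.le
        _ = B := by
            rw [← Real.rpow_add hr0, show 2*σ₁ + (2*σ-2*σ₁) = 2*σ by ring, hBdef]
    have m2 : r ^ (2*σ₂) * (εs/2) ^ (2*σ-2*σ₂) ≤ B := by
      have h1 : (εs/2) ^ (2*σ-2*σ₂) ≤ r ^ (2*σ-2*σ₂) :=
        Real.rpow_le_rpow hε2.le hrε (by linarith)
      calc r ^ (2*σ₂) * (εs/2) ^ (2*σ-2*σ₂) ≤ r ^ (2*σ₂) * r ^ (2*σ-2*σ₂) :=
            mul_le_mul_of_nonneg_left h1 hr2pos.le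
        _ = B := by
            rw [← Real.rpow_add hr0, show 2*σ₂ + (2*σ-2*σ₂) = 2*σ by ring, hBdef]
    have hmin1 := min_le_left ((εs/2) ^ (2*σ-2*σ₁)) ((εs/2) ^ (2*σ-2*σ₂))
    have hmin2 := min_le_right ((εs/2) ^ (2*σ-2*σ₁)) ((εs/2) ^ (2*σ-2*σ₂))
    rw [hAdef]
    nlinarith [m1, m2, hr1pos, hr2pos]
  have ha₀A : a₀ ≤ A := by
    have h1 : (εs/2) ^ (2*σ₁) ≤ r ^ (2*σ₁) :=
      Real.rpow_le_rpow hε2.le hrε (by linarith)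
    rw [ha₀def, hAdef]
    linarith
  have hc₀m : c₀ ≤ min (B/A) (A/2) := by
    rw [hc₀def]
    apply le_min
    · exact le_trans (min_le_left _ _) hκBA
    · exact le_trans (min_le_right _ _) (by linarith)
  have hχle : ‖((χH r:ℝ):ℂ)‖ ≤ 1 := by
    rw [Complex.norm_real, Real.norm_eq_abs, abs_of_nonneg (hχrange r).1]
    exact (hχrange r).2
  have hexp : Real.exp (-(min (B/A) (A/2) * t)/2) ≤ Real.exp (-(c₀/2) * t) := by
    apply Real.exp_le_exp.mpr
    nlinarith [hc₀m]
  by_cases hD : (r ^ (2*σ₁) + r ^ (2*σ₂))^2 - 4 * r ^ (2*σ) = 0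
  · -- degenerate case: equal roots, kernels vanish
    have hdisc : discC σ σ₁ σ₂ r = 0 := by
      unfold discC
      rw [hD]
      simp only [Complex.ofReal_zero]
      exact Complex.zero_cpow (by norm_num)
    have hlameq : lam1C σ σ₁ σ₂ r = lam2C σ σ₁ σ₂ r := by
      unfold lam1C lam2C
      rw [hdisc]
      ring
    constructor
    · unfold Khat0
      simp only [hlameq, sub_self, div_zero, zero_mul, mul_zero, norm_zero]
      positivity
    · unfold Khat1
      simp only [hlameq, sub_self, div_zero, zero_mul, mul_zero, norm_zero]
      positivity
  · -- nondegenerate case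
    have hz : (((r ^ (2*σ₁) + r ^ (2*σ₂))^2 - 4 * r ^ (2*σ) : ℝ) : ℂ) ≠ 0 :=
      Complex.ofReal_ne_zero.mpr hD
    have hsq : discC σ σ₁ σ₂ r * discC σ σ₁ σ₂ r = ((A^2 - 4*B : ℝ):ℂ) := by
      unfold discC
      rw [← Complex.cpow_add _ _ hz, show (1:ℂ)/2 + 1/2 = 1 by norm_num, Complex.cpow_one,
        hAdef, hBdef]
    have hsum : lam1C σ σ₁ σ₂ r + lam2C σ σ₁ σ₂ r = ((-A : ℝ):ℂ) := by
      unfold lam1C lam2C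
      rw [hAdef]
      push_cast
      ring
    have hprod : lam1C σ σ₁ σ₂ r * lam2C σ σ₁ σ₂ r = ((B:ℝ):ℂ) := by
      have hexpand : lam1C σ σ₁ σ₂ r * lam2C σ σ₁ σ₂ r
          = ((((-(r ^ (2*σ₁))) - r ^ (2*σ₂) : ℝ):ℂ)^2
            - discC σ σ₁ σ₂ r * discC σ σ₁ σ₂ r)/4 := by
        unfold lam1C lam2C
        ring
      rw [hexpand, hsq, hAdef, hBdef]
      push_cast
      ring
    have hwa : r ^ (2*σ₂) ≤ A := by rw [hAdef]; linarith
    obtain ⟨H0, H1⟩ := master (lam1C σ σ₁ σ₂ r) (lam2C σ σ₁ σ₂ r) A B t (r ^ (2*σ₂))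
      hApos hBpos hBA2 hsum hprod ht0 hr2pos.le hwa
    constructor
    · have hb0 : ‖Khat0 σ σ₁ σ₂ t r * ((χH r:ℝ):ℂ)‖ ≤ ‖Khat0 σ σ₁ σ₂ t r‖ := by
        rw [norm_mul]
        exact mul_le_of_le_one_right (norm_nonneg _) hχle
      refine hb0.trans ?_
      unfold Khat0
      refine H0.trans ?_
      nlinarith [hexp, Real.exp_pos (-(c₀/2) * t), Real.exp_pos (-(min (B/A) (A/2) * t)/2)]
    · have hb0 : ‖((r ^ (2*σ₂) : ℝ):ℂ) * Khat1 σ σ₁ σ₂ t r * ((χH r:ℝ):ℂ)‖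
          ≤ ‖((r ^ (2*σ₂) : ℝ):ℂ) * Khat1 σ σ₁ σ₂ t r‖ := by
        rw [norm_mul]
        exact mul_le_of_le_one_right (norm_nonneg _) hχle
      refine hb0.trans ?_
      unfold Khat1
      refine H1.trans ?_
      nlinarith [hexp, Real.exp_pos (-(c₀/2) * t), Real.exp_pos (-(min (B/A) (A/2) * t)/2)]
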